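/- arXiv:1009.2273 — 3 statements merged into one kernel-verified Lean document; each statement's English description precedes it below -/
import Mathlib

section
/- For distinct phase-space points Y ≠ Z, the overlap of magnetic coherent states vanishes in the semiclassical limit: lim_{ℏ→0} |⟨v^A_ℏ(Z), v^A_ℏ(Y)⟩|² = 0; while for Y = Z the overlap equals 1 for all ℏ. -/
open MeasureTheory Complex Real Filter Topology
open scoped BigOperators
open scoped FourierTransform

noncomputable section

def circA (N : ℕ) (A : (Fin N → ℝ) → (Fin N → ℝ)) (y x : Fin N → ℝ) : ℝ :=
  ∫ t in (0:ℝ)..1, ∑ j, A (y + t • (x - y)) j * (x j - y j)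

def cohVec (N : ℕ) (A : (Fin N → ℝ) → (Fin N → ℝ)) (v : (Fin N → ℝ) → ℂ) (ℏ : ℝ)
    (Z : (Fin N → ℝ) × (Fin N → ℝ)) (x : Fin N → ℝ) : ℂ :=
  Complex.exp (Complex.I * (((∑ j, (x j - Z.1 j / 2) * Z.2 j)) / ℏ)) *
  Complex.exp (Complex.I * ((circA N A Z.1 x) / ℏ)) *
  ((ℏ ^ (-(N : ℝ) / 4) : ℝ) : ℂ) * v (fun j => (x j - Z.1 j) / Real.sqrt ℏ)

/-- The magnetic field `B = dA` associated with the vector potential `A`. -/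
def magField (N : ℕ) (A : (Fin N → ℝ) → (Fin N → ℝ)) (x : Fin N → ℝ) (j k : Fin N) : ℝ :=
  fderiv ℝ (fun y => A y k) x (Pi.single j 1) - fderiv ℝ (fun y => A y j) x (Pi.single k 1)

/- ### Auxiliary lemmas -/

lemma div_fun_eq_smul {N : ℕ} (s : ℝ) (x z : Fin N → ℝ) :
    (fun j => (x j - z j) / s) = s⁻¹ • (x - z) := by
  funext j; simp [div_eq_inv_mul]

lemma cohVec_eq (N : ℕ) (A : (Fin N → ℝ) → (Fin N → ℝ)) (v : (Fin N → ℝ) → ℂ) (ℏ : ℝ)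
    (Z : (Fin N → ℝ) × (Fin N → ℝ)) (x : Fin N → ℝ) :
    cohVec N A v ℏ Z x =
      Complex.exp (Complex.I *
        ((((∑ j, (x j - Z.1 j / 2) * Z.2 j) / ℏ + circA N A Z.1 x / ℏ : ℝ)) : ℂ)) *
      ((ℏ ^ (-(N : ℝ) / 4) : ℝ) : ℂ) * v ((Real.sqrt ℏ)⁻¹ • (x - Z.1)) := by
  rw [cohVec, div_fun_eq_smul, Complex.ofReal_add, Complex.ofReal_div, Complex.ofReal_div,
    mul_add, Complex.exp_add]

lemma conj_mul_aux (a b c : ℝ) (p q : ℂ) :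
    (starRingEnd ℂ) (Complex.exp (Complex.I * (a : ℂ)) * ((c : ℝ) : ℂ) * p) *
      (Complex.exp (Complex.I * (b : ℂ)) * ((c : ℝ) : ℂ) * q) =
    Complex.exp (Complex.I * ((b - a : ℝ) : ℂ)) * ((c * c : ℝ) : ℂ) *
      ((starRingEnd ℂ) p * q) := by
  simp only [map_mul, ← Complex.exp_conj, Complex.conj_I, Complex.conj_ofReal,
    neg_mul, Complex.ofReal_pow, Complex.ofReal_mul]
  rw [Complex.ofReal_sub, mul_sub, sub_eq_add_neg, Complex.exp_add]
  ring

lemma coh_conj_mul (N : ℕ) (A : (Fin N → ℝ) → (Fin N → ℝ)) (v : (Fin N → ℝ) → ℂ) (ℏ : ℝ)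
    (Y Z : (Fin N → ℝ) × (Fin N → ℝ)) (x : Fin N → ℝ) :
    (starRingEnd ℂ) (cohVec N A v ℏ Z x) * cohVec N A v ℏ Y x =
      Complex.exp (Complex.I *
        ((((∑ j, (x j - Y.1 j / 2) * Y.2 j) / ℏ + circA N A Y.1 x / ℏ)
          - ((∑ j, (x j - Z.1 j / 2) * Z.2 j) / ℏ + circA N A Z.1 x / ℏ) : ℝ) : ℂ)) *
      ((ℏ ^ (-(N : ℝ) / 4) * ℏ ^ (-(N : ℝ) / 4) : ℝ) : ℂ) *
      ((starRingEnd ℂ) (v ((Real.sqrt ℏ)⁻¹ • (x - Z.1))) * v ((Real.sqrt ℏ)⁻¹ • (x - Y.1))) := by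
  rw [cohVec_eq, cohVec_eq, conj_mul_aux]

lemma conj_mul_self (p : ℂ) : (starRingEnd ℂ) p * p = ((‖p‖ ^ 2 : ℝ) : ℂ) := by
  rw [mul_comm, Complex.mul_conj, Complex.normSq_eq_norm_sq]

lemma coh_norm_aux (a c : ℝ) (hc : 0 ≤ c) (p q : ℂ) :
    ‖Complex.exp (Complex.I * (a : ℂ)) * ((c : ℝ) : ℂ) * ((starRingEnd ℂ) p * q)‖
      = c * (‖p‖ * ‖q‖) := by
  rw [norm_mul, norm_mul, norm_mul, mul_comm Complex.I, Complex.norm_exp_ofReal_mul_I,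
    Complex.norm_real, Real.norm_eq_abs, _root_.abs_of_nonneg hc, RCLike.norm_conj, one_mul]

lemma rpow_quarter_sq {ℏ : ℝ} (hℏ : 0 < ℏ) (N : ℕ) :
    ℏ ^ (-(N : ℝ) / 4) * ℏ ^ (-(N : ℝ) / 4) = ℏ ^ (-(N : ℝ) / 2) := by
  rw [← Real.rpow_add hℏ, show -(N : ℝ) / 4 + -(N : ℝ) / 4 = -(N : ℝ) / 2 by ring]

lemma rpow_half_pow {ℏ : ℝ} (hℏ : 0 < ℏ) (N : ℕ) :
    ℏ ^ (-(N : ℝ) / 2) * (Real.sqrt ℏ) ^ N = 1 := by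
  rw [Real.sqrt_eq_rpow, ← Real.rpow_natCast (ℏ ^ ((1:ℝ)/2)) N, ← Real.rpow_mul hℏ.le,
    ← Real.rpow_add hℏ]
  rw [show -(N : ℝ) / 2 + 1 / 2 * (N : ℝ) = 0 by ring, Real.rpow_zero]

lemma coh_norm (N : ℕ) (A : (Fin N → ℝ) → (Fin N → ℝ)) (v : (Fin N → ℝ) → ℂ) {ℏ : ℝ}
    (hℏ : 0 < ℏ) (Y Z : (Fin N → ℝ) × (Fin N → ℝ)) (x : Fin N → ℝ) :
    ‖(starRingEnd ℂ) (cohVec N A v ℏ Z x) * cohVec N A v ℏ Y x‖ =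
      ℏ ^ (-(N : ℝ) / 2) *
        (‖v ((Real.sqrt ℏ)⁻¹ • (x - Z.1))‖ * ‖v ((Real.sqrt ℏ)⁻¹ • (x - Y.1))‖) := by
  rw [coh_conj_mul, coh_norm_aux _ _ (by positivity), rpow_quarter_sq hℏ]

lemma integral_comp_shift_smul {E : Type*} [NormedAddCommGroup E] [NormedSpace ℝ E]
    (N : ℕ) (f : (Fin N → ℝ) → E) {s : ℝ} (hs : 0 ≤ s) (z : Fin N → ℝ) :
    ∫ x, f (s⁻¹ • (x - z)) = s ^ N • ∫ x, f x := by
  have h1 : (∫ x, f (s⁻¹ • (x - z))) = ∫ x, (fun y => f (s⁻¹ • y)) (x - z) := rfl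
  rw [h1, MeasureTheory.integral_sub_right_eq_self (fun y => f (s⁻¹ • y)) z,
    MeasureTheory.Measure.integral_comp_inv_smul volume f s]
  congr 1
  rw [_root_.abs_of_nonneg (pow_nonneg hs _), Module.finrank_fintype_fun_eq_card,
    Fintype.card_fin]

lemma sqrt_inv_tendsto : Tendsto (fun ℏ : ℝ => (Real.sqrt ℏ)⁻¹) (𝓝[>] (0:ℝ)) atTop := by
  apply tendsto_inv_nhdsGT_zero.comp
  rw [tendsto_nhdsWithin_iff]
  constructor
  · exact (Real.continuous_sqrt.tendsto' 0 0 Real.sqrt_zero).mono_left nhdsWithin_le_nhds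
  · filter_upwards [self_mem_nhdsWithin] with ℏ (hℏ : 0 < ℏ)
    exact Real.sqrt_pos.mpr hℏ

lemma tendsto_smul_cobdd {N : ℕ} {d : Fin N → ℝ} (hd : d ≠ 0) {c : ℝ → ℝ}
    (hc : Tendsto c (𝓝[>] (0:ℝ)) atTop) :
    Tendsto (fun ℏ : ℝ => c ℏ • d) (𝓝[>] (0:ℝ)) (cocompact (Fin N → ℝ)) := by
  rw [← Metric.cobounded_eq_cocompact, ← tendsto_norm_atTop_iff_cobounded]
  have h2 : Tendsto (fun ℏ : ℝ => c ℏ * ‖d‖) (𝓝[>] (0:ℝ)) atTop :=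
    hc.atTop_mul_const (norm_pos_iff.mpr hd)
  apply tendsto_atTop_mono _ h2
  intro ℏ
  rw [norm_smul, Real.norm_eq_abs]
  exact mul_le_mul_of_nonneg_right (le_abs_self _) (norm_nonneg d)

lemma tendsto_add_smul_cocompact {N : ℕ} (u : Fin N → ℝ) {d : Fin N → ℝ} (hd : d ≠ 0) :
    Tendsto (fun ℏ : ℝ => u + (Real.sqrt ℏ)⁻¹ • d) (𝓝[>] (0:ℝ))
      (cocompact (Fin N → ℝ)) := by
  rw [← Metric.cobounded_eq_cocompact, ← tendsto_norm_atTop_iff_cobounded]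
  have h2 : Tendsto (fun ℏ : ℝ => (Real.sqrt ℏ)⁻¹ * ‖d‖ - ‖u‖) (𝓝[>] (0:ℝ)) atTop := by
    apply tendsto_atTop_add_const_right _ (-‖u‖) (sqrt_inv_tendsto.atTop_mul_const
      (norm_pos_iff.mpr hd)) |>.congr
    intro ℏ; ring
  apply tendsto_atTop_mono _ h2
  intro ℏ
  have h3 : ‖(Real.sqrt ℏ)⁻¹ • d‖ ≤ ‖u + (Real.sqrt ℏ)⁻¹ • d‖ + ‖u‖ := by
    calc ‖(Real.sqrt ℏ)⁻¹ • d‖ = ‖(u + (Real.sqrt ℏ)⁻¹ • d) + (-u)‖ := by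
          congr 1; abel
      _ ≤ ‖u + (Real.sqrt ℏ)⁻¹ • d‖ + ‖u‖ := by
          simpa using norm_add_le (u + (Real.sqrt ℏ)⁻¹ • d) (-u)
  have h4 : (Real.sqrt ℏ)⁻¹ * ‖d‖ ≤ ‖(Real.sqrt ℏ)⁻¹ • d‖ := by
    rw [norm_smul, Real.norm_eq_abs, _root_.abs_of_nonneg (inv_nonneg.mpr (Real.sqrt_nonneg ℏ))]
  linarith

def dotL (N : ℕ) : (Fin N → ℝ) →ₗ[ℝ] ((Fin N → ℝ) →L[ℝ] ℝ) where
  toFun c := ∑ j, c j • ContinuousLinearMap.proj j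
  map_add' a b := by simp [add_smul, Finset.sum_add_distrib]
  map_smul' m a := by simp [smul_smul, Finset.smul_sum]

lemma dotL_apply {N : ℕ} (c u : Fin N → ℝ) : dotL N c u = ∑ j, c j * u j := by
  simp [dotL]

lemma dotL_closedEmbedding (N : ℕ) : IsClosedEmbedding (dotL N) := by
  apply LinearMap.isClosedEmbedding_of_injective
  rw [LinearMap.ker_eq_bot]
  intro a b h
  funext j
  have := congrArg (fun L : (Fin N → ℝ) →L[ℝ] ℝ => L (Pi.single j 1)) h
  simpa [dotL_apply, Pi.single_apply, mul_ite, Finset.sum_ite_eq'] using this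

lemma schwartz_norm_bound (N : ℕ) (v : SchwartzMap (Fin N → ℝ) ℂ) :
    ∃ C : ℝ, ∀ x, ‖v x‖ ≤ C := by
  obtain ⟨C, -, hC⟩ := v.decay 0 0
  refine ⟨C, fun x => ?_⟩
  simpa [norm_iteratedFDeriv_zero] using hC x

lemma caseA (N : ℕ) (A : (Fin N → ℝ) → (Fin N → ℝ)) (v : SchwartzMap (Fin N → ℝ) ℂ)
    {Y Z : (Fin N → ℝ) × (Fin N → ℝ)} (hzy : Y.1 ≠ Z.1) :
    Tendsto (fun ℏ : ℝ =>
        ‖∫ x, (starRingEnd ℂ) (cohVec N A (fun y => v y) ℏ Z x) *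
            cohVec N A (fun y => v y) ℏ Y x‖ ^ 2)
      (𝓝[>] 0) (𝓝 0) := by
  have hd : Z.1 - Y.1 ≠ 0 := sub_ne_zero.mpr (Ne.symm hzy)
  set Φ : ℝ → ℝ := fun ℏ => ∫ u, ‖v u‖ * ‖v (u + (Real.sqrt ℏ)⁻¹ • (Z.1 - Y.1))‖ with hΦ_def
  obtain ⟨C, hC⟩ := schwartz_norm_bound N v
  have hΦ : Tendsto Φ (𝓝[>] (0:ℝ)) (𝓝 0) := by
    have h := MeasureTheory.tendsto_integral_filter_of_dominated_convergence
      (μ := volume) (l := 𝓝[>] (0:ℝ))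
      (F := fun ℏ u => ‖v u‖ * ‖v (u + (Real.sqrt ℏ)⁻¹ • (Z.1 - Y.1))‖)
      (f := fun _ => (0:ℝ)) (bound := fun u => ‖v u‖ * C)
      (Eventually.of_forall fun ℏ =>
        ((v.continuous.norm).mul
          ((v.continuous.comp (continuous_id.add continuous_const)).norm)).aestronglyMeasurable)
      (Eventually.of_forall fun ℏ => ae_of_all _ fun u => by
        rw [Real.norm_eq_abs, _root_.abs_of_nonneg (by positivity)]
        exact mul_le_mul_of_nonneg_left (hC _) (norm_nonneg _))
      ((v.integrable.norm).mul_const C)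
      (ae_of_all _ fun u => by
        have h := (zero_at_infty (v : SchwartzMap (Fin N → ℝ) ℂ)).comp
          (tendsto_add_smul_cocompact u hd)
        simpa using tendsto_const_nhds.mul h.norm)
    simpa using h
  apply squeeze_zero' (Eventually.of_forall fun ℏ => by positivity) ?_ (by simpa using hΦ.pow 2)
  filter_upwards [self_mem_nhdsWithin] with ℏ (hℏ : 0 < ℏ)
  have key : ‖∫ x, (starRingEnd ℂ) (cohVec N A (fun y => v y) ℏ Z x) *
      cohVec N A (fun y => v y) ℏ Y x‖ ≤ Φ ℏ := by
    calc ‖∫ x, (starRingEnd ℂ) (cohVec N A (fun y => v y) ℏ Z x) *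
        cohVec N A (fun y => v y) ℏ Y x‖
        ≤ ∫ x, ‖(starRingEnd ℂ) (cohVec N A (fun y => v y) ℏ Z x) *
            cohVec N A (fun y => v y) ℏ Y x‖ := norm_integral_le_integral_norm _
      _ = ∫ x, ℏ ^ (-(N:ℝ)/2) *
          ((fun u => ‖v u‖ * ‖v (u + (Real.sqrt ℏ)⁻¹ • (Z.1 - Y.1))‖)
            ((Real.sqrt ℏ)⁻¹ • (x - Z.1))) := by
          refine integral_congr_ae (ae_of_all _ fun x => ?_)
          dsimp only
          rw [coh_norm N A _ hℏ, ← smul_add, sub_add_sub_cancel]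
      _ = ℏ ^ (-(N:ℝ)/2) * ∫ x, (fun u => ‖v u‖ * ‖v (u + (Real.sqrt ℏ)⁻¹ • (Z.1 - Y.1))‖)
            ((Real.sqrt ℏ)⁻¹ • (x - Z.1)) := integral_const_mul _ _
      _ = ℏ ^ (-(N:ℝ)/2) * ((Real.sqrt ℏ) ^ N • Φ ℏ) := by
          have hcov := integral_comp_shift_smul N
            (fun u => ‖v u‖ * ‖v (u + (Real.sqrt ℏ)⁻¹ • (Z.1 - Y.1))‖)
            (Real.sqrt_nonneg ℏ) Z.1
          rw [hcov]
      _ = Φ ℏ := by rw [smul_eq_mul, ← mul_assoc, rpow_half_pow hℏ, one_mul]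
  exact pow_le_pow_left₀ (norm_nonneg _) key 2

lemma caseB (N : ℕ) (A : (Fin N → ℝ) → (Fin N → ℝ)) (v : SchwartzMap (Fin N → ℝ) ℂ)
    {Y Z : (Fin N → ℝ) × (Fin N → ℝ)} (hzy : Y.1 = Z.1) (hw : Y.2 - Z.2 ≠ 0) :
    Tendsto (fun ℏ : ℝ =>
        ‖∫ x, (starRingEnd ℂ) (cohVec N A (fun y => v y) ℏ Z x) *
            cohVec N A (fun y => v y) ℏ Y x‖ ^ 2)
      (𝓝[>] 0) (𝓝 0) := by
  have hnw : (-(Y.2 - Z.2) : Fin N → ℝ) ≠ 0 := neg_ne_zero.mpr hw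
  set g : (Fin N → ℝ) → ℂ := fun u => ((‖v u‖ ^ 2 : ℝ) : ℂ) with hg_def
  set W : ℝ → ((Fin N → ℝ) →L[ℝ] ℝ) := fun ℏ =>
    dotL N (((2 * π)⁻¹ * (Real.sqrt ℏ)⁻¹) • (-(Y.2 - Z.2))) with hW_def
  have hW : Tendsto W (𝓝[>] (0:ℝ)) (cocompact _) :=
    (dotL_closedEmbedding N).tendsto_cocompact.comp
      (tendsto_smul_cobdd hnw (sqrt_inv_tendsto.const_mul_atTop (by positivity)))
  have hRL : Tendsto (fun ℏ => ∫ u, 𝐞 (-(W ℏ) u) • g u) (𝓝[>] (0:ℝ)) (𝓝 0) :=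
    (_root_.tendsto_integral_exp_smul_cocompact g volume).comp hW
  have hRL2 : Tendsto (fun ℏ => ‖∫ u, 𝐞 (-(W ℏ) u) • g u‖ ^ 2) (𝓝[>] (0:ℝ)) (𝓝 0) := by
    simpa using hRL.norm.pow 2
  apply hRL2.congr'
  filter_upwards [self_mem_nhdsWithin] with ℏ (hℏ : 0 < ℏ)
  have hs : 0 < Real.sqrt ℏ := Real.sqrt_pos.mpr hℏ
  have hs2 : Real.sqrt ℏ * Real.sqrt ℏ = ℏ := Real.mul_self_sqrt hℏ.le
  -- pointwise identity
  have hpt : ∀ x, (starRingEnd ℂ) (cohVec N A (fun y => v y) ℏ Z x) *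
      cohVec N A (fun y => v y) ℏ Y x =
      (Complex.exp (Complex.I *
          (((∑ j, (Z.1 j - Z.1 j / 2) * (Y.2 j - Z.2 j)) / ℏ : ℝ) : ℂ)) *
        ((ℏ ^ (-(N:ℝ)/4) * ℏ ^ (-(N:ℝ)/4) : ℝ) : ℂ)) *
      ((fun ξ => Complex.exp (Complex.I *
          ((∑ j, ξ j * ((Real.sqrt ℏ)⁻¹ * (Y.2 j - Z.2 j)) : ℝ) : ℂ)) * g ξ)
        ((Real.sqrt ℏ)⁻¹ • (x - Z.1))) := by
    intro x
    rw [coh_conj_mul, hzy]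
    have hθ : ((∑ j, (x j - Z.1 j / 2) * Y.2 j) / ℏ + circA N A Z.1 x / ℏ)
        - ((∑ j, (x j - Z.1 j / 2) * Z.2 j) / ℏ + circA N A Z.1 x / ℏ)
        = (∑ j, (Z.1 j - Z.1 j / 2) * (Y.2 j - Z.2 j)) / ℏ
          + ∑ j, ((Real.sqrt ℏ)⁻¹ • (x - Z.1)) j * ((Real.sqrt ℏ)⁻¹ * (Y.2 j - Z.2 j)) := by
      have h1 : ((∑ j, (x j - Z.1 j / 2) * Y.2 j) / ℏ + circA N A Z.1 x / ℏ)
          - ((∑ j, (x j - Z.1 j / 2) * Z.2 j) / ℏ + circA N A Z.1 x / ℏ)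
          = ((∑ j, (x j - Z.1 j / 2) * Y.2 j) - (∑ j, (x j - Z.1 j / 2) * Z.2 j)) / ℏ := by
        ring
      rw [h1, ← Finset.sum_sub_distrib, Finset.sum_div, Finset.sum_div,
        ← Finset.sum_add_distrib]
      refine Finset.sum_congr rfl fun j _ => ?_
      simp only [Pi.smul_apply, Pi.sub_apply, smul_eq_mul]
      rw [← hs2]
      field_simp
      simp only [Real.sqrt_sq hs.le]
      ring
    rw [hθ, Complex.ofReal_add, mul_add, Complex.exp_add, conj_mul_self]
    dsimp only
    ring
  -- the integral identity
  have hint : (∫ x, (starRingEnd ℂ) (cohVec N A (fun y => v y) ℏ Z x) *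
      cohVec N A (fun y => v y) ℏ Y x) =
      (Complex.exp (Complex.I *
          (((∑ j, (Z.1 j - Z.1 j / 2) * (Y.2 j - Z.2 j)) / ℏ : ℝ) : ℂ)) *
        ((ℏ ^ (-(N:ℝ)/4) * ℏ ^ (-(N:ℝ)/4) : ℝ) : ℂ)) *
      ((Real.sqrt ℏ) ^ N • ∫ u, 𝐞 (-(W ℏ) u) • g u) := by
    rw [integral_congr_ae (ae_of_all _ hpt), integral_const_mul]
    congr 1
    have hcov := integral_comp_shift_smul N
      (fun ξ => Complex.exp (Complex.I *
          ((∑ j, ξ j * ((Real.sqrt ℏ)⁻¹ * (Y.2 j - Z.2 j)) : ℝ) : ℂ)) * g ξ)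
      (Real.sqrt_nonneg ℏ) Z.1
    rw [hcov]
    congr 1
    refine integral_congr_ae (ae_of_all _ fun ξ => ?_)
    dsimp only
    have hreal : 2 * π * -(W ℏ ξ) = ∑ j, ξ j * ((Real.sqrt ℏ)⁻¹ * (Y.2 j - Z.2 j)) := by
      rw [hW_def]
      dsimp only
      rw [dotL_apply, ← Finset.sum_neg_distrib, Finset.mul_sum]
      refine Finset.sum_congr rfl fun j _ => ?_
      simp only [Pi.smul_apply, Pi.neg_apply, smul_eq_mul]
      field_simp
      simp only [Pi.sub_apply]
      ring
    rw [Circle.smul_def, Real.fourierChar_apply, smul_eq_mul, hreal, mul_comm Complex.I]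
  -- conclude with norms
  rw [hint]
  rw [norm_mul, norm_mul, norm_smul, mul_comm Complex.I, Complex.norm_exp_ofReal_mul_I,
    one_mul, Complex.norm_real, Real.norm_eq_abs,
    _root_.abs_of_nonneg (by positivity : (0:ℝ) ≤ ℏ ^ (-(N:ℝ)/4) * ℏ ^ (-(N:ℝ)/4)),
    rpow_quarter_sq hℏ, Real.norm_eq_abs,
    _root_.abs_of_nonneg (pow_nonneg (Real.sqrt_nonneg ℏ) N), ← mul_assoc,
    rpow_half_pow hℏ, one_mul]

lemma caseDiag (N : ℕ) (A : (Fin N → ℝ) → (Fin N → ℝ)) (v : SchwartzMap (Fin N → ℝ) ℂ)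
    (hv1 : ∫ x, ‖v x‖ ^ 2 = 1) (Z : (Fin N → ℝ) × (Fin N → ℝ)) {ℏ : ℝ} (hℏ : 0 < ℏ) :
    ‖∫ x, (starRingEnd ℂ) (cohVec N A (fun y => v y) ℏ Z x) *
        cohVec N A (fun y => v y) ℏ Z x‖ ^ 2 = 1 := by
  have hpt : ∀ x, (starRingEnd ℂ) (cohVec N A (fun y => v y) ℏ Z x) *
      cohVec N A (fun y => v y) ℏ Z x =
      ((ℏ ^ (-(N:ℝ)/2) * ‖v ((Real.sqrt ℏ)⁻¹ • (x - Z.1))‖ ^ 2 : ℝ) : ℂ) := by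
    intro x
    rw [coh_conj_mul, sub_self, Complex.ofReal_zero, mul_zero, Complex.exp_zero, one_mul,
      conj_mul_self, rpow_quarter_sq hℏ, ← Complex.ofReal_mul]
  rw [integral_congr_ae (ae_of_all _ hpt)]
  have hofReal : (∫ x, ((ℏ ^ (-(N:ℝ)/2) * ‖v ((Real.sqrt ℏ)⁻¹ • (x - Z.1))‖ ^ 2 : ℝ) : ℂ))
      = (((∫ x, ℏ ^ (-(N:ℝ)/2) * ‖v ((Real.sqrt ℏ)⁻¹ • (x - Z.1))‖ ^ 2 : ℝ)) : ℂ) :=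
    integral_ofReal
  rw [hofReal]
  have hre : (∫ x, ℏ ^ (-(N:ℝ)/2) * ‖v ((Real.sqrt ℏ)⁻¹ • (x - Z.1))‖ ^ 2) = 1 := by
    rw [integral_const_mul]
    have hcov := integral_comp_shift_smul N (fun u => ‖v u‖ ^ 2) (Real.sqrt_nonneg ℏ) Z.1
    rw [hcov, hv1, smul_eq_mul, mul_one, rpow_half_pow hℏ]
  rw [hre]
  simp


/-- Semiclassical behavior of the overlap of magnetic coherent states: it vanishes as
`ℏ → 0` for distinct phase-space points and equals `1` on the diagonal. -/
theorem cohVec_overlap_limit (N : ℕ)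
    (A : (Fin N → ℝ) → (Fin N → ℝ)) (hA : ContDiff ℝ (⊤ : ℕ∞) A)
    (hApol : ∀ n : ℕ, ∃ C k : ℝ, ∀ x, ‖iteratedFDeriv ℝ n A x‖ ≤ C * (1 + ‖x‖) ^ k)
    (hB : ∀ (j k : Fin N) (n : ℕ), ∃ C : ℝ, ∀ x,
      ‖iteratedFDeriv ℝ n (fun y => magField N A y j k) x‖ ≤ C)
    (v : SchwartzMap (Fin N → ℝ) ℂ) (hv1 : ∫ x, ‖v x‖ ^ 2 = 1)
    (Y Z : (Fin N → ℝ) × (Fin N → ℝ)) :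
    (Y ≠ Z →
      Tendsto (fun ℏ : ℝ =>
          ‖∫ x, (starRingEnd ℂ) (cohVec N A (fun y => v y) ℏ Z x) *
              cohVec N A (fun y => v y) ℏ Y x‖ ^ 2)
        (𝓝[>] 0) (𝓝 0)) ∧
    (Y = Z → ∀ ℏ ∈ Set.Ioc (0:ℝ) 1,
      ‖∫ x, (starRingEnd ℂ) (cohVec N A (fun y => v y) ℏ Z x) *
          cohVec N A (fun y => v y) ℏ Y x‖ ^ 2 = 1) := by
  constructor
  · intro hYZ
    rcases eq_or_ne Y.1 Z.1 with h1 | h1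
    · have h2 : Y.2 - Z.2 ≠ 0 := by
        intro h
        exact hYZ (Prod.ext h1 (by rwa [sub_eq_zero] at h))
      exact caseB N A v h1 h2
    · exact caseA N A v h1
  · intro h ℏ hℏ
    subst h
    exact caseDiag N A v hv1 Y hℏ.1
end
end

section
/- Trace formula for the magnetic Berezin quantization: if f ∈ L¹(Ξ) ∩ L^∞(Ξ), then B^A_ℏ(f) is trace class and Tr[B^A_ℏ(f)] = (2πℏ)^{−N} ∫_Ξ f(Y) dY. -/
open MeasureTheory Complex Real
open scoped BigOperators InnerProductSpace

noncomputable section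

/-- Any Hilbert basis of a separable space has countable index type. -/
lemma countable_of_hilbertBasis {E : Type*} [NormedAddCommGroup E] [InnerProductSpace ℂ E]
    [TopologicalSpace.SeparableSpace E] {ι : Type} (e : HilbertBasis ι ℂ E) : Countable ι := by
  have hdist : ∀ i j : ι, i ≠ j → (1:ℝ) ≤ ‖e i - e j‖ := by
    intro i j hij
    have h1 : ‖e i‖ = 1 := e.orthonormal.1 i
    have h2 : ‖e j‖ = 1 := e.orthonormal.1 j
    have h0 : ⟪e i, e j⟫_ℂ = 0 := e.orthonormal.2 hij
    have hsq : ‖e i - e j‖ ^ 2 = 2 := by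
      rw [@norm_sub_sq ℂ, h0, h1, h2]; norm_num
    nlinarith [norm_nonneg (e i - e j)]
  have hdisj : (Set.univ : Set ι).PairwiseDisjoint (fun i => Metric.ball (e i) (1/2)) := by
    intro i _ j _ hij
    apply Metric.ball_disjoint_ball
    rw [dist_eq_norm]
    linarith [hdist i j hij]
  have hcc : (Set.univ : Set ι).Countable :=
    hdisj.countable_of_isOpen (fun i _ => Metric.isOpen_ball)
      (fun i _ => Metric.nonempty_ball.2 (by norm_num))
  exact Set.countable_univ_iff.mp hcc

lemma circA_cont (N : ℕ) {A : (Fin N → ℝ) → (Fin N → ℝ)} (hA : Continuous A) :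
    Continuous (fun p : (Fin N → ℝ) × (Fin N → ℝ) => circA N A p.1 p.2) := by
  apply intervalIntegral.continuous_parametric_intervalIntegral_of_continuous'
  apply continuous_finset_sum
  intro j _
  apply Continuous.mul
  · exact ((continuous_apply j).comp hA).comp (by fun_prop)
  · fun_prop

lemma cohVec_cont (N : ℕ) {A : (Fin N → ℝ) → (Fin N → ℝ)} (hA : Continuous A)
    (v : SchwartzMap (Fin N → ℝ) ℂ) (ℏ : ℝ) :
    Continuous (fun p : ((Fin N → ℝ) × (Fin N → ℝ)) × (Fin N → ℝ) =>
      cohVec N A (fun y => v y) ℏ p.1 p.2) := by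
  unfold cohVec
  apply Continuous.mul
  · apply Continuous.mul
    · apply Continuous.mul
      · apply Complex.continuous_exp.comp
        apply continuous_const.mul
        apply Continuous.div_const
        apply Complex.continuous_ofReal.comp
        apply continuous_finset_sum
        intro j _
        exact (((continuous_apply j).comp continuous_snd).sub
          (((continuous_apply j).comp (continuous_fst.comp continuous_fst)).div_const 2)).mul
          ((continuous_apply j).comp (continuous_snd.comp continuous_fst))
      · apply Complex.continuous_exp.comp
        apply continuous_const.mul
        apply Continuous.div_const
        exact Complex.continuous_ofReal.comp
          ((circA_cont N hA).comp ((continuous_fst.comp continuous_fst).prodMk continuous_snd))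
    · exact continuous_const
  · refine v.continuous.comp (continuous_pi fun j => ?_)
    exact (((continuous_apply j).comp continuous_snd).sub
      ((continuous_apply j).comp (continuous_fst.comp continuous_fst))).div_const _

lemma norm_cohVec (N : ℕ) (A : (Fin N → ℝ) → (Fin N → ℝ)) (v : (Fin N → ℝ) → ℂ) {ℏ : ℝ}
    (hℏ : 0 < ℏ) (Z : (Fin N → ℝ) × (Fin N → ℝ)) (x : Fin N → ℝ) :
    ‖cohVec N A v ℏ Z x‖ = ℏ ^ (-(N : ℝ) / 4) * ‖v ((Real.sqrt ℏ)⁻¹ • (x - Z.1))‖ := by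
  unfold cohVec
  have e1 : ∀ r : ℝ, Complex.I * ((r:ℂ) / (ℏ:ℂ)) = ((r / ℏ : ℝ) : ℂ) * Complex.I := by
    intro r; push_cast; ring
  rw [norm_mul, norm_mul, norm_mul, e1, e1, Complex.norm_exp_ofReal_mul_I,
    Complex.norm_exp_ofReal_mul_I, Complex.norm_real, Real.norm_eq_abs,
    abs_of_pos (Real.rpow_pos_of_pos hℏ _)]
  have : (fun j => (x j - Z.1 j) / Real.sqrt ℏ) = (Real.sqrt ℏ)⁻¹ • (x - Z.1) := by
    funext j; simp [div_eq_inv_mul]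
  rw [this]; ring

lemma integral_norm_cohVec_sq (N : ℕ) (A : (Fin N → ℝ) → (Fin N → ℝ))
    (v : SchwartzMap (Fin N → ℝ) ℂ) (hv1 : ∫ x, ‖v x‖ ^ 2 = 1) {ℏ : ℝ}
    (hℏ : 0 < ℏ) (Z : (Fin N → ℝ) × (Fin N → ℝ)) :
    ∫ x, ‖cohVec N A (fun y => v y) ℏ Z x‖ ^ 2 = 1 := by
  have hs : (0:ℝ) < Real.sqrt ℏ := Real.sqrt_pos.2 hℏ
  have key : ∀ x, ‖cohVec N A (fun y => v y) ℏ Z x‖ ^ 2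
      = ℏ ^ (-(N:ℝ)/2) * ‖v ((Real.sqrt ℏ)⁻¹ • (x - Z.1))‖ ^ 2 := by
    intro x
    rw [norm_cohVec N A _ hℏ Z x, mul_pow, ← Real.rpow_natCast (ℏ ^ (-(N:ℝ)/4)) 2,
      ← Real.rpow_mul hℏ.le]
    rw [show (-(N:ℝ)/4 * ((2:ℕ):ℝ)) = -(N:ℝ)/2 by push_cast; ring]
  simp_rw [key]
  rw [integral_const_mul]
  have ht : ∫ x, ‖v ((Real.sqrt ℏ)⁻¹ • (x - Z.1))‖ ^ 2
      = ∫ x, ‖v ((Real.sqrt ℏ)⁻¹ • x)‖ ^ 2 :=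
    integral_sub_right_eq_self (fun x => ‖v ((Real.sqrt ℏ)⁻¹ • x)‖ ^ 2) Z.1
  rw [ht, Measure.integral_comp_inv_smul_of_nonneg volume (fun x => ‖v x‖ ^ 2) hs.le,
    hv1, smul_eq_mul, mul_one, Module.finrank_fin_fun, ← Real.rpow_natCast (Real.sqrt ℏ) N,
    Real.sqrt_eq_rpow, ← Real.rpow_mul hℏ.le, ← Real.rpow_add hℏ,
    show (-(N:ℝ)/2 + 1/2*(N:ℝ)) = 0 by ring, Real.rpow_zero]

/-- Trace formula for the magnetic Berezin quantization: for `f ∈ L¹ ∩ L∞`, the diagonal of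
`B^A_ℏ(f)` is absolutely summable in every Hilbert basis (trace class) and the trace equals
`(2πℏ)^{−N} ∫_Ξ f(Y) dY`. -/
theorem berezin_trace_formula (N : ℕ)
    (A : (Fin N → ℝ) → (Fin N → ℝ)) (hA : ContDiff ℝ (⊤ : ℕ∞) A)
    (v : SchwartzMap (Fin N → ℝ) ℂ) (hv1 : ∫ x, ‖v x‖ ^ 2 = 1)
    (ℏ : ℝ) (hℏ : ℏ ∈ Set.Ioc (0:ℝ) 1)
    (w : ((Fin N → ℝ) × (Fin N → ℝ)) → Lp ℂ 2 (volume : Measure (Fin N → ℝ)))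
    (hw : ∀ Y, ∀ᵐ x, (w Y : (Fin N → ℝ) → ℂ) x = cohVec N A (fun y => v y) ℏ Y x)
    (f : ((Fin N → ℝ) × (Fin N → ℝ)) → ℂ)
    (hf1 : MemLp f 1 (volume : Measure ((Fin N → ℝ) × (Fin N → ℝ))))
    (hfinf : MemLp f ⊤ (volume : Measure ((Fin N → ℝ) × (Fin N → ℝ))))
    (T : Lp ℂ 2 (volume : Measure (Fin N → ℝ)) →L[ℂ] Lp ℂ 2 (volume : Measure (Fin N → ℝ)))
    (hT : ∀ u, ⟪u, T u⟫_ℂ =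
      (((2 * Real.pi * ℏ) ^ (-(N : ℝ)) : ℝ) : ℂ) *
        ∫ Y : (Fin N → ℝ) × (Fin N → ℝ), f Y * ((‖⟪w Y, u⟫_ℂ‖ ^ 2 : ℝ) : ℂ)) :
    ∀ (ι : Type) (e : HilbertBasis ι ℂ (Lp ℂ 2 (volume : Measure (Fin N → ℝ)))),
      Summable (fun i => ‖⟪e i, T (e i)⟫_ℂ‖) ∧
      ∑' i, ⟪e i, T (e i)⟫_ℂ =
        (((2 * Real.pi * ℏ) ^ (-(N : ℝ)) : ℝ) : ℂ) *
          ∫ Y : (Fin N → ℝ) × (Fin N → ℝ), f Y := by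
  intro ι e
  obtain ⟨hℏ0, -⟩ := hℏ
  haveI : SecondCountableTopology (Lp ℂ 2 (volume : Measure (Fin N → ℝ))) :=
    @MeasureTheory.Lp.SecondCountableTopology _ _ _ _ _ _ ⟨one_le_two⟩ ⟨by norm_num⟩ _ _
  haveI : Countable ι := countable_of_hilbertBasis e
  set c : ℝ := (2 * Real.pi * ℏ) ^ (-(N : ℝ)) with hc
  have hcpos : 0 < c := Real.rpow_pos_of_pos (by positivity) _
  -- inner products as explicit integrals
  set Φ : Lp ℂ 2 (volume : Measure (Fin N → ℝ)) → ((Fin N → ℝ) × (Fin N → ℝ)) → ℂ :=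
    fun u Y => ∫ x, (starRingEnd ℂ) (cohVec N A (fun y => v y) ℏ Y x) *
      (u : (Fin N → ℝ) → ℂ) x with hΦdef
  have hΦ : ∀ u Y, ⟪w Y, u⟫_ℂ = Φ u Y := by
    intro u Y
    rw [MeasureTheory.L2.inner_def]
    refine integral_congr_ae ?_
    filter_upwards [hw Y] with x hx
    rw [RCLike.inner_apply, hx, mul_comm]
  have hΦmeas : ∀ u : Lp ℂ 2 (volume : Measure (Fin N → ℝ)),
      AEStronglyMeasurable (Φ u) (volume : Measure ((Fin N → ℝ) × (Fin N → ℝ))) := by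
    intro u
    have h1 : AEStronglyMeasurable
        (fun p : ((Fin N → ℝ) × (Fin N → ℝ)) × (Fin N → ℝ) =>
          (starRingEnd ℂ) (cohVec N A (fun y => v y) ℏ p.1 p.2) * (u : (Fin N → ℝ) → ℂ) p.2)
        ((volume : Measure ((Fin N → ℝ) × (Fin N → ℝ))).prod (volume : Measure (Fin N → ℝ))) := by
      apply AEStronglyMeasurable.mul
      · exact (Complex.continuous_conj.comp (cohVec_cont N hA.continuous v ℏ)).aestronglyMeasurable
      · exact (Lp.aestronglyMeasurable u).comp_quasiMeasurePreserving
          Measure.quasiMeasurePreserving_snd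
    exact h1.integral_prod_right'
  -- each coherent state is a unit vector
  have hone : ∀ Y, ⟪w Y, w Y⟫_ℂ = 1 := by
    intro Y
    rw [MeasureTheory.L2.inner_def]
    have : ∫ x, ⟪(w Y : (Fin N → ℝ) → ℂ) x, (w Y : (Fin N → ℝ) → ℂ) x⟫_ℂ
        = ∫ x, ((‖cohVec N A (fun y => v y) ℏ Y x‖ ^ 2 : ℝ) : ℂ) := by
      refine integral_congr_ae ?_
      filter_upwards [hw Y] with x hx
      rw [RCLike.inner_apply, hx, Complex.mul_conj, Complex.normSq_eq_norm_sq]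
    rw [this, show (∫ x, ((‖cohVec N A (fun y => v y) ℏ Y x‖ ^ 2 : ℝ) : ℂ))
        = ((∫ x, ‖cohVec N A (fun y => v y) ℏ Y x‖ ^ 2 : ℝ) : ℂ) from integral_ofReal,
      integral_norm_cohVec_sq N A v hv1 hℏ0 Y, Complex.ofReal_one]
  -- Parseval: pointwise sum of |⟨w Y, e i⟩|² equals 1
  have hg : ∀ Y, HasSum (fun i => ‖⟪w Y, e i⟫_ℂ‖ ^ 2) 1 := by
    intro Y
    have h := e.hasSum_inner_mul_inner (w Y) (w Y)
    rw [hone Y] at h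
    have heq : (fun i => ⟪w Y, e i⟫_ℂ * ⟪e i, w Y⟫_ℂ)
        = fun i => ((‖⟪w Y, e i⟫_ℂ‖ ^ 2 : ℝ) : ℂ) := by
      funext i
      rw [← inner_conj_symm (e i) (w Y), Complex.mul_conj, Complex.normSq_eq_norm_sq]
    rw [heq, show (1:ℂ) = ((1:ℝ):ℂ) by norm_num] at h
    exact Complex.hasSum_ofReal.mp h
  -- the summands
  set F : ι → ((Fin N → ℝ) × (Fin N → ℝ)) → ℂ :=
    fun i Y => f Y * ((‖⟪w Y, e i⟫_ℂ‖ ^ 2 : ℝ) : ℂ) with hF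
  have hFmeas : ∀ i, AEStronglyMeasurable (F i)
      (volume : Measure ((Fin N → ℝ) × (Fin N → ℝ))) := by
    intro i
    have : F i = fun Y => f Y * ((‖Φ (e i) Y‖ ^ 2 : ℝ) : ℂ) := by
      funext Y; rw [hF]; simp only [hΦ (e i) Y]
    rw [this]
    exact hf1.aestronglyMeasurable.mul
      ((Complex.continuous_ofReal.comp (continuous_pow 2)).comp_aestronglyMeasurable
        (hΦmeas (e i)).norm)
  have hkey : ∀ Y, ∑' i, (‖F i Y‖₊ : ENNReal) = (‖f Y‖₊ : ENNReal) := by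
    intro Y
    have h1 : ∀ i, (‖F i Y‖₊ : ENNReal)
        = (‖f Y‖₊ : ENNReal) * ENNReal.ofReal (‖⟪w Y, e i⟫_ℂ‖ ^ 2) := by
      intro i
      rw [hF]
      simp only [nnnorm_mul, ENNReal.coe_mul]
      congr 1
      rw [← enorm_eq_nnnorm, ← ofReal_norm, Complex.norm_real, Real.norm_eq_abs]
      congr 1
      exact abs_of_nonneg (sq_nonneg _)
    simp_rw [h1]
    rw [ENNReal.tsum_mul_left, ← ENNReal.ofReal_tsum_of_nonneg (fun i => sq_nonneg _)
      (hg Y).summable, (hg Y).tsum_eq, ENNReal.ofReal_one, mul_one]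
  have hlint : ∑' i, ∫⁻ Y, (‖F i Y‖₊ : ENNReal) ≠ ⊤ := by
    rw [← lintegral_tsum (fun i => (hFmeas i).aemeasurable.nnnorm.coe_nnreal_ennreal)]
    have : ∫⁻ Y, ∑' i, (‖F i Y‖₊ : ENNReal) = ∫⁻ Y, (‖f Y‖₊ : ENNReal) :=
      lintegral_congr fun Y => hkey Y
    rw [this]
    exact (memLp_one_iff_integrable.mp hf1).2.ne
  constructor
  · -- summability
    refine Summable.of_nonneg_of_le (fun i => norm_nonneg _)
      (fun i => ?_) ((ENNReal.summable_toReal hlint).mul_left c)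
    rw [hT (e i)]
    calc ‖((c:ℂ)) * ∫ Y, F i Y‖ = c * ‖∫ Y, F i Y‖ := by
          rw [norm_mul, Complex.norm_real, Real.norm_eq_abs, abs_of_pos hcpos]
      _ ≤ c * (∫⁻ Y, (‖F i Y‖₊ : ENNReal)).toReal := by
          refine mul_le_mul_of_nonneg_left ?_ hcpos.le
          have := norm_integral_le_lintegral_norm (μ := (volume :
            Measure ((Fin N → ℝ) × (Fin N → ℝ)))) (F i)
          simpa only [ofReal_norm, enorm_eq_nnnorm] using this
  · -- value of the trace
    have hpt : ∀ Y, ∑' i, F i Y = f Y := by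
      intro Y
      have h := (Complex.hasSum_ofReal.mpr (hg Y)).mul_left (f Y)
      rw [Complex.ofReal_one, mul_one] at h
      exact h.tsum_eq
    calc ∑' i, ⟪e i, T (e i)⟫_ℂ = ∑' i, ((c:ℂ)) * ∫ Y, F i Y := by
          refine tsum_congr fun i => ?_; rw [hT (e i)]
      _ = ((c:ℂ)) * ∑' i, ∫ Y, F i Y := tsum_mul_left
      _ = ((c:ℂ)) * ∫ Y, ∑' i, F i Y := by rw [integral_tsum hFmeas hlint]
      _ = ((c:ℂ)) * ∫ Y, f Y := by
          congr 1; exact integral_congr_ae (Filter.Eventually.of_forall hpt)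
end
end

section
/- Gauge covariance of the magnetic Berezin quantization: if A' = A + dρ for a smooth function ρ : ℝ^N → ℝ, then B^{A'}_ℏ(f) = e^{iρ(Q)/ℏ} B^A_ℏ(f) e^{−iρ(Q)/ℏ}, where e^{iρ(Q)/ℏ} is the unitary multiplication operator by x ↦ e^{iρ(x)/ℏ} on L²(ℝ^N). -/
open MeasureTheory Complex Real
open scoped BigOperators InnerProductSpace

noncomputable section

/-- Gauge covariance of the magnetic Berezin quantization: if `A' = A + dρ` then
`B^{A'}_ℏ(f) = e^{iρ(Q)/ℏ} B^A_ℏ(f) e^{−iρ(Q)/ℏ}`. -/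
theorem berezin_gauge_covariance (N : ℕ)
    (A : (Fin N → ℝ) → (Fin N → ℝ)) (hA : Continuous A)
    (ρ : (Fin N → ℝ) → ℝ) (hρ : ContDiff ℝ (⊤ : ℕ∞) ρ)
    (A' : (Fin N → ℝ) → (Fin N → ℝ))
    (hA' : ∀ x j, A' x j = A x j + fderiv ℝ ρ x (Pi.single j 1))
    (v : (Fin N → ℝ) → ℂ) (hv : MemLp v 2 (volume : Measure (Fin N → ℝ)))
    (ℏ : ℝ) (hℏ : ℏ ∈ Set.Ioc (0:ℝ) 1)
    (w w' : ((Fin N → ℝ) × (Fin N → ℝ)) → Lp ℂ 2 (volume : Measure (Fin N → ℝ)))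
    (hw : ∀ Y, ∀ᵐ x, (w Y : (Fin N → ℝ) → ℂ) x = cohVec N A v ℏ Y x)
    (hw' : ∀ Y, ∀ᵐ x, (w' Y : (Fin N → ℝ) → ℂ) x = cohVec N A' v ℏ Y x)
    (f : ((Fin N → ℝ) × (Fin N → ℝ)) → ℂ)
    (hf : MemLp f ⊤ (volume : Measure ((Fin N → ℝ) × (Fin N → ℝ))))
    (T T' : Lp ℂ 2 (volume : Measure (Fin N → ℝ)) →L[ℂ] Lp ℂ 2 (volume : Measure (Fin N → ℝ)))
    (hT : ∀ u, ⟪u, T u⟫_ℂ =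
      (((2 * Real.pi * ℏ) ^ (-(N : ℝ)) : ℝ) : ℂ) *
        ∫ Y : (Fin N → ℝ) × (Fin N → ℝ), f Y * ((‖⟪w Y, u⟫_ℂ‖ ^ 2 : ℝ) : ℂ))
    (hT' : ∀ u, ⟪u, T' u⟫_ℂ =
      (((2 * Real.pi * ℏ) ^ (-(N : ℝ)) : ℝ) : ℂ) *
        ∫ Y : (Fin N → ℝ) × (Fin N → ℝ), f Y * ((‖⟪w' Y, u⟫_ℂ‖ ^ 2 : ℝ) : ℂ))
    (U Uinv : Lp ℂ 2 (volume : Measure (Fin N → ℝ)) →L[ℂ] Lp ℂ 2 (volume : Measure (Fin N → ℝ)))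
    (hU : ∀ u, ∀ᵐ x, (U u : (Fin N → ℝ) → ℂ) x = Complex.exp (Complex.I * (ρ x / ℏ)) * u x)
    (hUinv : ∀ u, ∀ᵐ x,
      (Uinv u : (Fin N → ℝ) → ℂ) x = Complex.exp (-(Complex.I * (ρ x / ℏ))) * u x) :
    T' = U ∘L T ∘L Uinv := by
  obtain ⟨hℏ0, hℏ1⟩ := hℏ
  have hfc : Continuous (fderiv ℝ ρ) := hρ.continuous_fderiv (by simp)
  -- Step A: gauge relation for the circulation
  have hcirc : ∀ y x : Fin N → ℝ, circA N A' y x = circA N A y x + (ρ x - ρ y) := by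
    intro y x
    have hpathc : Continuous fun t : ℝ => y + t • (x - y) :=
      continuous_const.add (continuous_id.smul continuous_const)
    have hpath : ∀ t : ℝ, HasDerivAt (fun s : ℝ => y + s • (x - y)) (x - y) t := by
      intro t
      simpa using ((hasDerivAt_id t).smul_const (x - y)).const_add y
    have hg : ∀ t : ℝ, HasDerivAt (fun s : ℝ => ρ (y + s • (x - y)))
        (fderiv ℝ ρ (y + t • (x - y)) (x - y)) t := by
      intro t
      exact (((hρ.differentiable (by simp)) (y + t • (x - y))).hasFDerivAt).comp_hasDerivAt t
        (hpath t)
    have hderiv_cont : Continuous fun t : ℝ => fderiv ℝ ρ (y + t • (x - y)) (x - y) :=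
      (hfc.comp hpathc).clm_apply continuous_const
    have hAc : Continuous fun t : ℝ => ∑ j, A (y + t • (x - y)) j * (x j - y j) := by
      apply continuous_finset_sum
      intro j _
      exact ((continuous_apply j).comp (hA.comp hpathc)).mul continuous_const
    have hsum : ∀ t : ℝ, ∑ j, A' (y + t • (x - y)) j * (x j - y j)
        = (∑ j, A (y + t • (x - y)) j * (x j - y j))
          + fderiv ℝ ρ (y + t • (x - y)) (x - y) := by
      intro t
      set p := y + t • (x - y)
      have hxy : (x - y) = ∑ j, (x j - y j) • (Pi.single j 1 : Fin N → ℝ) := by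
        funext k
        simp [Finset.sum_apply, Pi.single_apply]
      have hx : fderiv ℝ ρ p (x - y)
          = ∑ j, (x j - y j) * fderiv ℝ ρ p (Pi.single j 1) := by
        conv_lhs => rw [hxy]
        rw [map_sum]
        simp [smul_eq_mul]
      rw [hx]
      rw [← Finset.sum_add_distrib]
      congr 1
      funext j
      rw [hA' p j]
      ring
    unfold circA
    rw [intervalIntegral.integral_congr (fun t _ => hsum t)]
    rw [intervalIntegral.integral_add (hAc.intervalIntegrable _ _)
      (hderiv_cont.intervalIntegrable _ _)]
    congr 1
    have := intervalIntegral.integral_eq_sub_of_hasDerivAt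
      (f := fun s : ℝ => ρ (y + s • (x - y))) (fun t _ => hg t)
      (hderiv_cont.intervalIntegrable 0 1)
    rw [this]
    simp
  -- Step B: gauge relation for the coherent vectors
  have hcoh : ∀ (Y : (Fin N → ℝ) × (Fin N → ℝ)) (x : Fin N → ℝ),
      cohVec N A' v ℏ Y x
        = Complex.exp (Complex.I * (((ρ x : ℂ) - (ρ Y.1 : ℂ)) / (ℏ : ℂ))) *
            cohVec N A v ℏ Y x := by
    intro Y x
    unfold cohVec
    rw [hcirc Y.1 x, Complex.ofReal_add, Complex.ofReal_sub, add_div, mul_add,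
      Complex.exp_add]
    ring
  -- Step C: inner products
  have hinner : ∀ (Y : (Fin N → ℝ) × (Fin N → ℝ))
      (u : Lp ℂ 2 (volume : Measure (Fin N → ℝ))),
      ⟪w' Y, u⟫_ℂ = Complex.exp (Complex.I * ((ρ Y.1 : ℂ) / (ℏ : ℂ))) * ⟪w Y, Uinv u⟫_ℂ := by
    intro Y u
    rw [MeasureTheory.L2.inner_def, MeasureTheory.L2.inner_def, ← integral_const_mul]
    apply integral_congr_ae
    filter_upwards [hw' Y, hw Y, hUinv u] with x h1 h2 h3
    rw [RCLike.inner_apply, RCLike.inner_apply, h1, h2, h3, hcoh]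
    have key : (starRingEnd ℂ) (Complex.exp (Complex.I * (((ρ x : ℂ) - (ρ Y.1 : ℂ)) / (ℏ : ℂ))))
        = Complex.exp (Complex.I * ((ρ Y.1 : ℂ) / (ℏ : ℂ))) *
            Complex.exp (-(Complex.I * ((ρ x : ℂ) / (ℏ : ℂ)))) := by
      rw [← Complex.exp_conj, ← Complex.exp_add]
      congr 1
      simp only [map_mul, Complex.conj_I, map_div₀, map_sub, Complex.conj_ofReal]
      ring
    rw [map_mul, key]
    ring
  have hnorm : ∀ (Y : (Fin N → ℝ) × (Fin N → ℝ))
      (u : Lp ℂ 2 (volume : Measure (Fin N → ℝ))),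
      ‖⟪w' Y, u⟫_ℂ‖ = ‖⟪w Y, Uinv u⟫_ℂ‖ := by
    intro Y u
    rw [hinner Y u, norm_mul]
    have : Complex.I * ((ρ Y.1 : ℂ) / (ℏ : ℂ)) = ((ρ Y.1 / ℏ : ℝ) : ℂ) * Complex.I := by
      push_cast; ring
    rw [this, Complex.norm_exp_ofReal_mul_I, one_mul]
  -- Step D: Uinv is the adjoint of U
  have hadj : ∀ u z : Lp ℂ 2 (volume : Measure (Fin N → ℝ)),
      ⟪u, U z⟫_ℂ = ⟪Uinv u, z⟫_ℂ := by
    intro u z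
    rw [MeasureTheory.L2.inner_def, MeasureTheory.L2.inner_def]
    apply integral_congr_ae
    filter_upwards [hU z, hUinv u] with x h1 h2
    rw [RCLike.inner_apply, RCLike.inner_apply, h1, h2, map_mul]
    have key : (starRingEnd ℂ) (Complex.exp (-(Complex.I * ((ρ x : ℂ) / (ℏ : ℂ)))))
        = Complex.exp (Complex.I * ((ρ x : ℂ) / (ℏ : ℂ))) := by
      rw [← Complex.exp_conj]
      congr 1
      simp only [map_neg, map_mul, Complex.conj_I, map_div₀, Complex.conj_ofReal]
      ring
    rw [key]
    ring
  -- Step E: equality of quadratic forms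
  have main : ∀ u : Lp ℂ 2 (volume : Measure (Fin N → ℝ)),
      ⟪u, T' u⟫_ℂ = ⟪u, (U ∘L T ∘L Uinv) u⟫_ℂ := by
    intro u
    have h1 : ⟪u, (U ∘L T ∘L Uinv) u⟫_ℂ = ⟪Uinv u, T (Uinv u)⟫_ℂ := by
      simp only [ContinuousLinearMap.comp_apply]
      exact hadj u _
    rw [h1, hT, hT' u]
    congr 1
    apply integral_congr_ae
    filter_upwards with Y
    rw [hnorm Y u]
  -- conclude
  have hlin : (T' : Lp ℂ 2 (volume : Measure (Fin N → ℝ)) →ₗ[ℂ]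
      Lp ℂ 2 (volume : Measure (Fin N → ℝ)))
      = ((U ∘L T ∘L Uinv : _ →L[ℂ] _) : _ →ₗ[ℂ] _) := by
    rw [← ext_inner_map]
    intro x
    simp only [ContinuousLinearMap.coe_coe]
    rw [← inner_conj_symm (T' x) x, main x, inner_conj_symm]
  exact ContinuousLinearMap.coe_injective hlin
end
end
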